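/- The commutative rings C[x,y]/(xy, x²+y³) and C[a,b]/(ab, a²(b-1)+b³) are isomorphic as C-algebras. -/
import Mathlib


open MvPolynomial

noncomputable def myF : MvPolynomial (Fin 2) ℂ ≃ₐ[ℂ] MvPolynomial (Fin 2) ℂ :=
  AlgEquiv.ofAlgHom
    (aeval ![C Complex.I * X 0, X 1])
    (aeval ![(-C Complex.I) * X 0, X 1])
    (by
      apply MvPolynomial.algHom_ext
      intro i
      fin_cases i <;>
        simp [← mul_assoc, ← C_mul, Complex.I_mul_I])
    (by
      apply MvPolynomial.algHom_ext
      intro i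
      fin_cases i <;>
        simp [← mul_assoc, ← C_mul, Complex.I_mul_I])

theorem stmt7 :
    Nonempty
      ((MvPolynomial (Fin 2) ℂ ⧸
          Ideal.span {(X 0 * X 1 : MvPolynomial (Fin 2) ℂ), X 0 ^ 2 + X 1 ^ 3}) ≃ₐ[ℂ]
       (MvPolynomial (Fin 2) ℂ ⧸
          Ideal.span {(X 0 * X 1 : MvPolynomial (Fin 2) ℂ),
            X 0 ^ 2 * (X 1 - 1) + X 1 ^ 3})) := by
  refine ⟨Ideal.quotientEquivAlg _ _ myF ?_⟩
  rw [Ideal.map_span, Set.image_pair]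
  have h0 : (myF : MvPolynomial (Fin 2) ℂ →+* MvPolynomial (Fin 2) ℂ) (X 0 * X 1)
      = C Complex.I * (X 0 * X 1) := by
    simp [myF, mul_assoc]
  have h1 : (myF : MvPolynomial (Fin 2) ℂ →+* MvPolynomial (Fin 2) ℂ) (X 0 ^ 2 + X 1 ^ 3)
      = -(X 0 ^ 2) + X 1 ^ 3 := by
    simp [myF, mul_pow, ← C_pow, Complex.I_sq]
  rw [h0, h1]
  have hI : (C Complex.I : MvPolynomial (Fin 2) ℂ) ^ 2 = -1 := by
    rw [← C_pow, Complex.I_sq]; simp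
  apply le_antisymm <;> rw [Ideal.span_le] <;> rintro p (rfl | rfl) <;>
    rw [SetLike.mem_coe, Ideal.mem_span_pair]
  · exact ⟨(-C Complex.I), 0, by linear_combination (-(X 0 * X 1)) * hI⟩
  · exact ⟨(-C Complex.I) * X 0, 1, by linear_combination (-(X 0 ^ 2 * X 1)) * hI⟩
  · exact ⟨C Complex.I, 0, by ring⟩
  · exact ⟨-X 0, 1, by ring⟩
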